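/- In the homological perturbation setup, suppose moreover that c is a 𝕂-linear degree-0 involution of C such that m is c self-dual (so c commutes with m_{1,0} and induces an involution ĉ on D = H*(C, m_{1,0})), and that c∘i = i∘ĉ, ĉ∘p = p∘c and c∘h = h∘c. Then the A∞ structure m^D is ĉ self-dual, and the homomorphism 𝔦 is ĉ,c self-dual: i_{k,β}(ĉ(α₁),…,ĉ(α_k)) = (−1)^{s(τ;α)+k+1} c(i_{k,β}(α_k,…,α₁)) for all k ≥ 0, β ∈ G and homogeneous α₁,…,α_k ∈ D. -/

import Mathlib

/-!
Common definitions: gapped `A∞` algebras over the field `𝕂`, graded by `ℤ/N` (`N` even),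
with gapping monoid `G ⊆ ℝ≥0`.  Operations are recorded as families of `k`-ary maps
together with multilinearity and degree conditions; all sign conventions follow the paper.
Since the Koszul signs depend on the degrees of homogeneous arguments, all identities
involving signs are stated on homogeneous tuples.
-/

open scoped BigOperators

noncomputable section

/-- The sign `(−1)^x` for a parity `x : ZMod 2`, valued in `𝕂`. -/
def sgn2 (𝕂 : Type) [Field 𝕂] (x : ZMod 2) : 𝕂 := if x = 0 then 1 else -1

/-- Parity of a degree in `ℤ/N`; for even `N` this is the canonical map `ℤ/N → ℤ/2`. -/
def par2 {N : ℕ} (d : ZMod N) : ZMod 2 := ((ZMod.val d : ℕ) : ZMod 2)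

/-- Extension of a tuple by `0`. -/
def extZ {X : Type} [Zero X] {k : ℕ} (α : Fin k → X) : ℕ → X :=
  fun n => if h : n < k then α ⟨n, h⟩ else 0

/-- The tuple `(A 0, …, A (i₀−1), v, A (i₀+k₂), …)` of length `k₁` obtained by replacing the
`k₂` entries of `A` starting at position `i₀` by the single entry `v`. -/
def insArg {X : Type} [Zero X] (k₁ k₂ i₀ : ℕ) (v : X) (A : ℕ → X) : Fin k₁ → X :=
  fun j => if (j : ℕ) < i₀ then A j else if (j : ℕ) = i₀ then v else A ((j : ℕ) + k₂ - 1)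

/-- Multilinearity of a `k`-ary map. -/
def IsMultilin (𝕂 : Type) [Field 𝕂] {C D : Type} [AddCommGroup C] [Module 𝕂 C]
    [AddCommGroup D] [Module 𝕂 D] {k : ℕ} (f : (Fin k → C) → D) : Prop :=
  (∀ (α : Fin k → C) (j : Fin k) (x y : C),
    f (Function.update α j (x + y)) = f (Function.update α j x) + f (Function.update α j y)) ∧
  (∀ (α : Fin k → C) (j : Fin k) (c : 𝕂) (x : C),
    f (Function.update α j (c • x)) = c • f (Function.update α j x))

/-- The Koszul sign exponent `s(σ;α) = Σ_{i<j, σ(i)>σ(j)} (|α_{σ(i)}|+1)(|α_{σ(j)}|+1)`,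
computed from the degrees `d j = |α_j|`. -/
def koszulSign {N : ℕ} {k : ℕ} (σ : Equiv.Perm (Fin k)) (d : Fin k → ZMod N) : ZMod 2 :=
  ∑ p ∈ Finset.univ.filter (fun p : Fin k × Fin k => p.1 < p.2 ∧ σ p.2 < σ p.1),
    (par2 (d (σ p.1)) + 1) * (par2 (d (σ p.2)) + 1)

/-- `s(τ;α)` for the order-reversal permutation `τ : i ↦ k+1−i`. -/
def revSign {N : ℕ} {k : ℕ} (d : Fin k → ZMod N) : ZMod 2 :=
  koszulSign Fin.revPerm d

/-- A `k`-ary map between graded spaces has degree `t`: it sends homogeneous tuples of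
multidegree `d` into the piece of degree `Σ d + t`. -/
def HasDeg {𝕂 : Type} [Field 𝕂] {N : ℕ} {C D : Type} [AddCommGroup C] [Module 𝕂 C]
    [AddCommGroup D] [Module 𝕂 D] (ℳ : ZMod N → Submodule 𝕂 C)
    (𝒩 : ZMod N → Submodule 𝕂 D) (t : ℤ) {k : ℕ} (f : (Fin k → C) → D) : Prop :=
  ∀ (d : Fin k → ZMod N) (α : Fin k → C), (∀ j, α j ∈ ℳ (d j)) →
    f α ∈ 𝒩 ((∑ j, d j) + (t : ZMod N))

/-- The exponent `Σ_{j<i₀} (|α_j|+1)` appearing in the `A∞` relations (0-indexed). -/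
def insSign {N : ℕ} (D : ℕ → ZMod N) (i₀ : ℕ) : ZMod 2 :=
  ∑ j ∈ Finset.range i₀, (par2 (D j) + 1)

/-- Index set of the `G`-gapped `A∞` relations for inputs of arity `k` and energy `β`:
tuples `(k₁, k₂, i₀, β₁, β₂)` with `k₁+k₂ = k+1`, `i₀ < k₁` (`i₀` is the 0-indexed insertion
position) and `β₁+β₂ = β`.  By the finiteness assumption on `G` this set is finite. -/
def ainfIdx (G : AddSubmonoid ℝ) (k : ℕ) (β : G) : Set (ℕ × ℕ × ℕ × G × G) :=
  {t | t.1 + t.2.1 = k + 1 ∧ t.2.2.1 < t.1 ∧ t.2.2.2.1 + t.2.2.2.2 = β}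

/-- The term of the `A∞`-type relations indexed by `(k₁,k₂,i₀,β₁,β₂)`:
`(−1)^{Σ_{j<i₀}(|α_j|+1)} g_{k₁,β₁}(α₁,…,α_{i₀}, m_{k₂,β₂}(α_{i₀+1},…), …, α_k)`
(outer family `g`, inner family `m`). -/
def ainfTerm (𝕂 : Type) [Field 𝕂] {N : ℕ} {G : AddSubmonoid ℝ} {C D : Type}
    [AddCommGroup C] [Module 𝕂 C] [AddCommGroup D] [Module 𝕂 D]
    (g : ∀ k : ℕ, G → (Fin k → C) → D) (m : ∀ k : ℕ, G → (Fin k → C) → C)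
    {k : ℕ} (d : Fin k → ZMod N) (α : Fin k → C) : ℕ × ℕ × ℕ × G × G → D :=
  fun t =>
    sgn2 𝕂 (insSign (extZ d) t.2.2.1) •
      g t.1 t.2.2.2.1
        (insArg t.1 t.2.1 t.2.2.1
          (m t.2.1 t.2.2.2.2 fun l => extZ α (t.2.2.1 + (l : ℕ))) (extZ α))

/-- A `G`-gapped `A∞` algebra structure on the graded space `(C, ℳ)`: operations
`m_{k,β}` that are multilinear of degree `2−k`, with `m_{0,0} = 0`, satisfying the
`G`-gapped `A∞` relations on homogeneous tuples. -/
structure IsGappedAinf (𝕂 : Type) [Field 𝕂] {N : ℕ} (G : AddSubmonoid ℝ) {C : Type}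
    [AddCommGroup C] [Module 𝕂 C] (ℳ : ZMod N → Submodule 𝕂 C)
    (m : ∀ k : ℕ, G → (Fin k → C) → C) : Prop where
  multilinear : ∀ (k : ℕ) (β : G), IsMultilin 𝕂 (m k β)
  deg : ∀ (k : ℕ) (β : G), HasDeg ℳ ℳ (2 - (k : ℤ)) (m k β)
  zero : m 0 0 = 0
  rel : ∀ (k : ℕ) (β : G) (d : Fin k → ZMod N) (α : Fin k → C), (∀ j, α j ∈ ℳ (d j)) →
    (∑ᶠ t ∈ ainfIdx G k β, ainfTerm 𝕂 m m d α t) = 0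

/-- A `G`-gapped `A∞` pre-homomorphism: maps `f_{k,β}`, multilinear of degree `1−k`,
with `f_{0,0} = 0`. -/
structure IsGappedPreHom (𝕂 : Type) [Field 𝕂] {N : ℕ} (G : AddSubmonoid ℝ) {C D : Type}
    [AddCommGroup C] [Module 𝕂 C] [AddCommGroup D] [Module 𝕂 D]
    (ℳ : ZMod N → Submodule 𝕂 C) (𝒩 : ZMod N → Submodule 𝕂 D)
    (f : ∀ k : ℕ, G → (Fin k → C) → D) : Prop where
  multilinear : ∀ (k : ℕ) (β : G), IsMultilin 𝕂 (f k β)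
  deg : ∀ (k : ℕ) (β : G), HasDeg ℳ 𝒩 (1 - (k : ℤ)) (f k β)
  zero : f 0 0 = 0

/-- Index set for the composition-type sums: tuples `(l, (r₁,…,r_l), β₀, (β₁,…,β_l))`
with `r₁+⋯+r_l = k` and `β₀+β₁+⋯+β_l = β`. -/
def homIdx (G : AddSubmonoid ℝ) (k : ℕ) (β : G) :
    Set (Σ l : ℕ, (Fin l → ℕ) × G × (Fin l → G)) :=
  {t | (∑ j, t.2.1 j) = k ∧ t.2.2.1 + (∑ j, t.2.2.2 j) = β}

/-- Offset `r₁ + ⋯ + r_{j}` of the `j`-th chunk of the inputs. -/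
def chunkOff {l : ℕ} (r : Fin l → ℕ) (j : Fin l) : ℕ :=
  ∑ j' ∈ Finset.univ.filter (fun j' : Fin l => (j' : ℕ) < (j : ℕ)), r j'

/-- The term `g_{l,β₀}(f_{r₁,β₁}(α₁,…,α_{r₁}), …, f_{r_l,β_l}(α_{k−r_l+1},…,α_k))`. -/
def homTerm {G : AddSubmonoid ℝ} {C D E : Type} [Zero C]
    (g : ∀ l : ℕ, G → (Fin l → D) → E) (f : ∀ k : ℕ, G → (Fin k → C) → D)
    {k : ℕ} (α : Fin k → C) : (Σ l : ℕ, (Fin l → ℕ) × G × (Fin l → G)) → E :=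
  fun t =>
    g t.1 t.2.2.1 fun j =>
      f (t.2.1 j) (t.2.2.2 j) fun x => extZ α (chunkOff t.2.1 j + (x : ℕ))

/-- Composition of `G`-gapped `A∞` pre-homomorphisms. -/
def compPre (G : AddSubmonoid ℝ) {C D E : Type} [Zero C] [AddCommMonoid E]
    (g : ∀ l : ℕ, G → (Fin l → D) → E) (f : ∀ k : ℕ, G → (Fin k → C) → D) :
    ∀ k : ℕ, G → (Fin k → C) → E :=
  fun k β α => ∑ᶠ t ∈ homIdx G k β, homTerm g f α t

/-- A `G`-gapped `A∞` homomorphism from `(C, mC)` to `(D, mD)`. -/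
structure IsGappedHom (𝕂 : Type) [Field 𝕂] {N : ℕ} (G : AddSubmonoid ℝ) {C D : Type}
    [AddCommGroup C] [Module 𝕂 C] [AddCommGroup D] [Module 𝕂 D]
    (ℳ : ZMod N → Submodule 𝕂 C) (𝒩 : ZMod N → Submodule 𝕂 D)
    (mC : ∀ k : ℕ, G → (Fin k → C) → C) (mD : ∀ k : ℕ, G → (Fin k → D) → D)
    (f : ∀ k : ℕ, G → (Fin k → C) → D) : Prop where
  prehom : IsGappedPreHom 𝕂 G ℳ 𝒩 f
  hom : ∀ (k : ℕ) (β : G) (d : Fin k → ZMod N) (α : Fin k → C), (∀ j, α j ∈ ℳ (d j)) →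
    (∑ᶠ t ∈ homIdx G k β, homTerm mD f α t) = ∑ᶠ t ∈ ainfIdx G k β, ainfTerm 𝕂 f mC d α t

/-- `f'` is the opposite family of `f`:
`f'_{k,β}(α₁,…,α_k) = (−1)^{s(τ;α)+k+1} f_{k,β}(α_k,…,α₁)` on homogeneous tuples. -/
def IsOppFam (𝕂 : Type) [Field 𝕂] {N : ℕ} {G : AddSubmonoid ℝ} {C D : Type}
    [AddCommGroup C] [Module 𝕂 C] [AddCommGroup D] [Module 𝕂 D]
    (ℳ : ZMod N → Submodule 𝕂 C)
    (f f' : ∀ k : ℕ, G → (Fin k → C) → D) : Prop :=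
  ∀ (k : ℕ) (β : G) (d : Fin k → ZMod N) (α : Fin k → C), (∀ j, α j ∈ ℳ (d j)) →
    f' k β α = sgn2 𝕂 (revSign d + (k : ZMod 2) + 1) • f k β fun j => α (Fin.rev j)

/-- Self-duality of a family with respect to involutions `cC`, `cD`:
`f_{k,β}(c(α₁),…,c(α_k)) = (−1)^{s(τ;α)+k+1} c(f_{k,β}(α_k,…,α₁))` on homogeneous tuples. -/
def IsSelfDualFam (𝕂 : Type) [Field 𝕂] {N : ℕ} {G : AddSubmonoid ℝ} {C D : Type}
    [AddCommGroup C] [Module 𝕂 C] [AddCommGroup D] [Module 𝕂 D]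
    (ℳ : ZMod N → Submodule 𝕂 C) (cC : C →ₗ[𝕂] C) (cD : D →ₗ[𝕂] D)
    (f : ∀ k : ℕ, G → (Fin k → C) → D) : Prop :=
  ∀ (k : ℕ) (β : G) (d : Fin k → ZMod N) (α : Fin k → C), (∀ j, α j ∈ ℳ (d j)) →
    f k β (fun j => cC (α j)) =
      sgn2 𝕂 (revSign d + (k : ZMod 2) + 1) • cD (f k β fun j => α (Fin.rev j))

/-- The operation `m_{1,0}`, as an endomorphism of `C`. -/
def dOne {G : AddSubmonoid ℝ} {C : Type} [Zero C] (m : ∀ k : ℕ, G → (Fin k → C) → C) :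
    C → C :=
  fun x => m 1 0 ![x]

/-- The Hochschild coboundary of a `k`-cochain `η`, evaluated on a homogeneous `(k+1)`-tuple
of multidegree `d`.  Here `P a b x y` is the (possibly sign-twisted) product of `x ∈ ℳ a`
and `y ∈ ℳ b`, `e` is the parity of the internal degree `|η|` of `η` (as a map
`A[1]^{⊗k} → A`), and `out` is such that `η` sends tuples of multidegree `d'` into degree
`Σ d' + out`.  The formula is
`𝔟(η)(α₁,…,α_{k+1}) = (−1)^{|η|(|α₁|+1)+1} α₁·η(α₂,…,α_{k+1})`
`+ Σ_{i=1}^{k} (−1)^{|η|+1+Σ_{j=1}^{i}(|α_j|+1)} η(α₁,…,α_i·α_{i+1},…,α_{k+1})`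
`+ (−1)^{|η|+Σ_{j=1}^{k}(|α_j|+1)} η(α₁,…,α_k)·α_{k+1}`. -/
def hochB (𝕂 : Type) [Field 𝕂] {N : ℕ} {C : Type} [AddCommGroup C] [Module 𝕂 C]
    (P : ZMod N → ZMod N → C → C → C) (e : ZMod 2) (out : ZMod N)
    {k : ℕ} (η : (Fin k → C) → C) (d : Fin (k + 1) → ZMod N) (α : Fin (k + 1) → C) : C :=
  sgn2 𝕂 (e * (par2 (d 0) + 1) + 1) •
      P (d 0) ((∑ j : Fin k, d j.succ) + out) (α 0) (η fun j => α j.succ)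
    + (∑ i₀ ∈ Finset.range k,
        sgn2 𝕂 (e + 1 + ∑ j ∈ Finset.range (i₀ + 1), (par2 (extZ d j) + 1)) •
          η (insArg k 2 i₀
              (P (extZ d i₀) (extZ d (i₀ + 1)) (extZ α i₀) (extZ α (i₀ + 1))) (extZ α)))
    + sgn2 𝕂 (e + ∑ j ∈ Finset.range k, (par2 (extZ d j) + 1)) •
        P ((∑ j : Fin k, d j.castSucc) + out) (d (Fin.last k))
          (η fun j => α j.castSucc) (α (Fin.last k))

/-- The product of the underlying algebra of an `A∞` algebra:
`x ∘ y = (−1)^{|x|} m_{2,0}(x,y)` for `x` of degree `a`. -/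
def ulP (𝕂 : Type) [Field 𝕂] {N : ℕ} {G : AddSubmonoid ℝ} {C : Type} [AddCommGroup C]
    [Module 𝕂 C] (m : ∀ k : ℕ, G → (Fin k → C) → C) :
    ZMod N → ZMod N → C → C → C :=
  fun a _ x y => sgn2 𝕂 (par2 a) • m 2 0 ![x, y]

/-- The Hochschild coboundary for a graded associative algebra `A`, of a `k`-cochain `η`
of internal degree `t` (as a map `A[1]^{⊗k} → A`, so that `η` sends homogeneous tuples of
multidegree `d` into degree `Σ d + t − k`). -/
def hochBAlg (𝕂 : Type) [Field 𝕂] {N : ℕ} {A : Type} [Ring A] [Algebra 𝕂 A]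
    (t : ZMod N) {k : ℕ} (η : (Fin k → A) → A) (d : Fin (k + 1) → ZMod N)
    (α : Fin (k + 1) → A) : A :=
  hochB 𝕂 (fun _ _ x y => x * y) (par2 t) (t - (k : ZMod N)) η d α

/-- A Hochschild `k`-cochain of the graded algebra `(A, ℳ)` of internal degree `t`:
a multilinear map `A^{⊗k} → A`, regarded as a map `A[1]^{⊗k} → A` of degree `t`. -/
def IsHochCochain (𝕂 : Type) [Field 𝕂] {N : ℕ} {A : Type} [Ring A] [Algebra 𝕂 A]
    (ℳ : ZMod N → Submodule 𝕂 A) (t : ZMod N) {k : ℕ} (η : (Fin k → A) → A) : Prop :=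
  IsMultilin 𝕂 η ∧
    ∀ (d : Fin k → ZMod N) (α : Fin k → A), (∀ j, α j ∈ ℳ (d j)) →
      η α ∈ ℳ ((∑ j, d j) + t - (k : ZMod N))

/-- The graded-commutativity relation defining the free graded commutative algebra on the
graded vector space `(V, 𝒱)`: `v ⊗ w = (−1)^{|v||w|} w ⊗ v` for homogeneous `v, w`. -/
inductive GCRel (𝕂 : Type) [Field 𝕂] {N : ℕ} (V : Type) [AddCommGroup V] [Module 𝕂 V]
    (𝒱 : ZMod N → Submodule 𝕂 V) : TensorAlgebra 𝕂 V → TensorAlgebra 𝕂 V → Prop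
  | comm : ∀ {a b : ZMod N} {v w : V}, v ∈ 𝒱 a → w ∈ 𝒱 b →
      GCRel 𝕂 V 𝒱 (TensorAlgebra.ι 𝕂 v * TensorAlgebra.ι 𝕂 w)
        (sgn2 𝕂 (par2 a * par2 b) • (TensorAlgebra.ι 𝕂 w * TensorAlgebra.ι 𝕂 v))

/-- The free graded commutative algebra `ΛV` on the graded vector space `(V, 𝒱)`: the
quotient of the tensor algebra by the two-sided ideal generated by
`v⊗w − (−1)^{|v||w|} w⊗v`. -/
abbrev FreeGCA (𝕂 : Type) [Field 𝕂] {N : ℕ} (V : Type) [AddCommGroup V] [Module 𝕂 V]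
    (𝒱 : ZMod N → Submodule 𝕂 V) : Type :=
  RingQuot (GCRel 𝕂 V 𝒱)

/-- The image of `v ∈ V` in `ΛV`. -/
def gcaGen (𝕂 : Type) [Field 𝕂] {N : ℕ} (V : Type) [AddCommGroup V] [Module 𝕂 V]
    (𝒱 : ZMod N → Submodule 𝕂 V) (v : V) : FreeGCA 𝕂 V 𝒱 :=
  RingQuot.mkAlgHom 𝕂 (GCRel 𝕂 V 𝒱) (TensorAlgebra.ι 𝕂 v)

/-- The grading of `ΛV`: the piece of degree `e` is spanned by products of homogeneous
generators whose degrees sum to `e`. -/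
def gcaGrade (𝕂 : Type) [Field 𝕂] {N : ℕ} (V : Type) [AddCommGroup V] [Module 𝕂 V]
    (𝒱 : ZMod N → Submodule 𝕂 V) (e : ZMod N) : Submodule 𝕂 (FreeGCA 𝕂 V 𝒱) :=
  Submodule.span 𝕂 {x | ∃ l : List (ZMod N × V), (∀ p ∈ l, p.2 ∈ 𝒱 p.1) ∧
    (l.map Prod.fst).sum = e ∧ x = (l.map fun p => gcaGen 𝕂 V 𝒱 p.2).prod}
end


/-! ### Auxiliary lemmas for the proof of Statement 7 -/

section Stmt7Aux

open Finset

lemma sgn2_add' (𝕂 : Type) [Field 𝕂] (x y : ZMod 2) :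
    sgn2 𝕂 (x + y) = sgn2 𝕂 x * sgn2 𝕂 y := by
  have h2 : (1 + 1 : ZMod 2) = 0 := by decide
  have h10 : (1 : ZMod 2) ≠ 0 := by decide
  rcases (show ∀ z : ZMod 2, z = 0 ∨ z = 1 by decide) x with rfl | rfl <;>
    rcases (show ∀ z : ZMod 2, z = 0 ∨ z = 1 by decide) y with rfl | rfl <;>
    simp [sgn2, h2, h10]

lemma sgn2_ne_zero (𝕂 : Type) [Field 𝕂] (x : ZMod 2) : sgn2 𝕂 x ≠ 0 := by
  unfold sgn2; split <;> simp

lemma sgn2_sum (𝕂 : Type) [Field 𝕂] {α : Type*} (s : Finset α) (f : α → ZMod 2) :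
    ∏ j ∈ s, sgn2 𝕂 (f j) = sgn2 𝕂 (∑ j ∈ s, f j) := by
  classical
  induction s using Finset.induction with
  | empty => simp [sgn2]
  | insert a s h ih => rw [Finset.prod_insert h, Finset.sum_insert h, sgn2_add', ih]

lemma natAbs_cast_two (x : ℤ) : ((x.natAbs : ℕ) : ZMod 2) = ((x : ℤ) : ZMod 2) := by
  rcases Int.natAbs_eq x with h | h
  · conv_rhs => rw [h]
    rw [Int.cast_natCast]
  · conv_rhs => rw [h]
    rw [Int.cast_neg, Int.cast_natCast, eq_neg_iff_add_eq_zero, ← two_mul]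
    simp
    exact Or.inl (by decide)

lemma par2_eq_cast {N : ℕ} (hN : 2 ∣ N) (d : ZMod N) :
    par2 d = ZMod.castHom hN (ZMod 2) d := by
  rcases N with _ | n
  · show ((d : ℤ).natAbs : ZMod 2) = _
    rw [ZMod.castHom_apply]
    exact natAbs_cast_two d
  · rw [ZMod.castHom_apply, ← ZMod.natCast_val]
    rfl

lemma par2_add {N : ℕ} (hN : 2 ∣ N) (a b : ZMod N) :
    par2 (a + b) = par2 a + par2 b := by
  simp only [par2_eq_cast hN, map_add]

lemma par2_intCast {N : ℕ} (hN : 2 ∣ N) (z : ℤ) :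
    par2 ((z : ℤ) : ZMod N) = ((z : ℤ) : ZMod 2) := by
  rw [par2_eq_cast hN, map_intCast]

lemma par2_sum {N : ℕ} (hN : 2 ∣ N) {α : Type*} (s : Finset α) (f : α → ZMod N) :
    par2 (∑ j ∈ s, f j) = ∑ j ∈ s, par2 (f j) := by
  simp only [par2_eq_cast hN, map_sum]

variable {𝕂 : Type} [Field 𝕂]

section Multilin
variable {C D : Type} [AddCommGroup C] [Module 𝕂 C] [AddCommGroup D] [Module 𝕂 D]

lemma IsMultilin.zero_slot {k : ℕ} {f : (Fin k → C) → D} (hf : IsMultilin 𝕂 f)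
    (α : Fin k → C) (j : Fin k) (hj : α j = 0) : f α = 0 := by
  have h1 : Function.update α j ((0 : 𝕂) • (0 : C)) = α := by
    rw [zero_smul, ← hj, Function.update_eq_self]
  have := hf.2 α j 0 0
  rw [h1, zero_smul] at this
  exact this

lemma IsMultilin.smul_tuple {k : ℕ} {f : (Fin k → C) → D} (hf : IsMultilin 𝕂 f)
    (cf : Fin k → 𝕂) (v : Fin k → C) :
    f (fun j => cf j • v j) = (∏ j, cf j) • f v := by
  classical
  have key : ∀ s : Finset (Fin k),
      f (fun j => if j ∈ s then cf j • v j else v j) = (∏ j ∈ s, cf j) • f v := by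
    intro s
    induction s using Finset.induction with
    | empty => simp
    | @insert a s ha ih =>
      have hfun : (fun j => if j ∈ insert a s then cf j • v j else v j) =
          Function.update (fun j => if j ∈ s then cf j • v j else v j) a (cf a • v a) := by
        funext j
        by_cases hj : j = a
        · subst hj; simp [Function.update_self]
        · simp [Function.update_of_ne hj, Finset.mem_insert, hj]
      have hupd : Function.update (fun j => if j ∈ s then cf j • v j else v j) a (v a) =
          (fun j => if j ∈ s then cf j • v j else v j) := by
        conv_rhs => rw [← Function.update_eq_self a (fun j => if j ∈ s then cf j • v j else v j)]
        simp [ha]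
      rw [hfun, hf.2 _ a (cf a) (v a), hupd, ih, Finset.prod_insert ha, smul_smul]
  have := key Finset.univ
  simpa using this

end Multilin

section FinsumAux
variable {V W : Type} [AddCommGroup V] [Module 𝕂 V] [AddCommGroup W] [Module 𝕂 W]

lemma finsum_mem_submodule {α : Type*} {S : Set α} {F : α → V} (M : Submodule 𝕂 V)
    (h : ∀ t ∈ S, F t ∈ M) : (∑ᶠ t ∈ S, F t) ∈ M := by
  classical
  rw [finsum_mem_def]
  by_cases hfin : (Function.support (Set.indicator S F)).Finite
  · rw [finsum_eq_sum _ hfin]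
    refine Submodule.sum_mem _ fun i _ => ?_
    by_cases hi : i ∈ S
    · rw [Set.indicator_of_mem hi]; exact h i hi
    · rw [Set.indicator_of_notMem hi]; exact zero_mem _
  · rw [finsum_of_infinite_support hfin]; exact zero_mem _

lemma map_finsum_mem_inj {α : Type*} (S : Set α) (F : α → V) (e : V →ₗ[𝕂] W)
    (he : Function.Injective e) :
    ∑ᶠ t ∈ S, e (F t) = e (∑ᶠ t ∈ S, F t) := by
  classical
  rw [finsum_mem_def, finsum_mem_def]
  have hind : Set.indicator S (fun t => e (F t)) = fun t => e (Set.indicator S F t) := by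
    funext t
    by_cases ht : t ∈ S
    · rw [Set.indicator_of_mem ht, Set.indicator_of_mem ht]
    · rw [Set.indicator_of_notMem ht, Set.indicator_of_notMem ht, map_zero]
  rw [hind]
  exact (AddMonoidHom.map_finsum_of_injective e.toAddMonoidHom he _).symm

lemma smul_map_finsum_mem_inj {α : Type*} (S : Set α) (F : α → V) (e : V →ₗ[𝕂] W)
    (he : Function.Injective e) (a : 𝕂) (ha : a ≠ 0) :
    ∑ᶠ t ∈ S, a • e (F t) = a • e (∑ᶠ t ∈ S, F t) := by
  have he' : Function.Injective (a • e : V →ₗ[𝕂] W) := by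
    intro x y hxy
    simp only [LinearMap.smul_apply] at hxy
    exact he (smul_right_injective W ha hxy)
  have := map_finsum_mem_inj S F (a • e) he'
  simpa only [LinearMap.smul_apply] using this

end FinsumAux

/-- nested-form pair sum over `range k`. -/
def pairSN (k : ℕ) (g : ℕ → ZMod 2) : ZMod 2 :=
  ∑ j ∈ range k, (∑ i ∈ range j, g i) * g j

lemma TBN (a b : ℕ) (g : ℕ → ZMod 2) :
    pairSN (a + b) g = pairSN a g + pairSN b (fun n => g (a + n)) +
      (∑ x ∈ range a, g x) * ∑ y ∈ range b, g (a + y) := by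
  induction b with
  | zero => simp [pairSN]
  | succ b ih =>
    have h1 : a + (b + 1) = (a + b) + 1 := by omega
    rw [h1]
    unfold pairSN at *
    rw [Finset.sum_range_succ, ih,
      Finset.sum_range_succ (fun j => (∑ i ∈ range j, (fun n => g (a + n)) i) * g (a + j)) b,
      Finset.sum_range_succ (fun y => g (a + y)) b, Finset.sum_range_add g a b]
    ring

/-- splitting a range-sum into chunks -/
lemma sum_range_chunks {M : Type*} [AddCommMonoid M] (rN : ℕ → ℕ) (D : ℕ → M) :
    ∀ l : ℕ, ∑ j ∈ range l, ∑ x ∈ range (rN j), D ((∑ i ∈ range j, rN i) + x)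
      = ∑ i ∈ range (∑ i ∈ range l, rN i), D i := by
  intro l
  induction l with
  | zero => simp
  | succ l ih =>
    rw [Finset.sum_range_succ, ih, Finset.sum_range_succ rN l, Finset.sum_range_add D]

/-- chunk decomposition of the pair sum, ℕ version -/
lemma pairSN_chunks (rN : ℕ → ℕ) (g : ℕ → ZMod 2) (l : ℕ) :
    pairSN (∑ i ∈ range l, rN i) g
      = (∑ j ∈ range l, pairSN (rN j) (fun n => g ((∑ i ∈ range j, rN i) + n)))
        + pairSN l (fun j => ∑ x ∈ range (rN j), g ((∑ i ∈ range j, rN i) + x)) := by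
  induction l with
  | zero => simp [pairSN]
  | succ l ih =>
    rw [Finset.sum_range_succ rN l, TBN, ih]
    rw [Finset.sum_range_succ (fun j => pairSN (rN j) fun n => g ((∑ i ∈ range j, rN i) + n)) l]
    rw [show pairSN (l+1) (fun j => ∑ x ∈ range (rN j), g ((∑ i ∈ range j, rN i) + x))
        = pairSN l (fun j => ∑ x ∈ range (rN j), g ((∑ i ∈ range j, rN i) + x)) +
          (∑ j ∈ range l, ∑ x ∈ range (rN j), g ((∑ i ∈ range j, rN i) + x)) *
            (∑ x ∈ range (rN l), g ((∑ i ∈ range l, rN i) + x)) from Finset.sum_range_succ _ l]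
    rw [sum_range_chunks rN g l]
    ring

lemma sum_range_ite {M : Type*} [AddCommMonoid M] (g : ℕ → M) {m k : ℕ} (h : m ≤ k) :
    ∑ i ∈ range k, (if i < m then g i else 0) = ∑ i ∈ range m, g i := by
  rw [← Finset.sum_filter]; congr 1; ext i; simp only [mem_filter, mem_range]; omega

lemma revSign_eq_pairSN {N k : ℕ} (d : Fin k → ZMod N) (g : ℕ → ZMod 2)
    (hg : ∀ i : Fin k, g (i : ℕ) = par2 (d i) + 1) : revSign d = pairSN k g := by
  classical
  unfold revSign koszulSign
  have h1 : (Finset.univ.filter (fun p : Fin k × Fin k => p.1 < p.2 ∧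
      Fin.revPerm p.2 < Fin.revPerm p.1)) =
      Finset.univ.filter (fun p : Fin k × Fin k => p.1 < p.2) := by
    apply Finset.filter_congr
    intro p _
    simp [Fin.rev_lt_rev, and_iff_left_iff_imp]
  rw [h1]
  have h2 : ∑ p ∈ Finset.univ.filter (fun p : Fin k × Fin k => p.1 < p.2),
        (par2 (d (Fin.revPerm p.1)) + 1) * (par2 (d (Fin.revPerm p.2)) + 1)
      = ∑ p ∈ Finset.univ.filter (fun p : Fin k × Fin k => p.1 < p.2),
        (par2 (d p.1) + 1) * (par2 (d p.2) + 1) := by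
    refine Finset.sum_nbij' (fun p => (p.2.rev, p.1.rev)) (fun p => (p.2.rev, p.1.rev))
      ?_ ?_ ?_ ?_ ?_
    · intro p hp
      simp only [mem_filter, mem_univ, true_and] at hp ⊢
      exact Fin.rev_lt_rev.mpr hp
    · intro p hp
      simp only [mem_filter, mem_univ, true_and] at hp ⊢
      exact Fin.rev_lt_rev.mpr hp
    · intro p _; simp
    · intro p _; simp
    · intro p _
      simp only [Fin.revPerm_apply, Fin.rev_rev]
      ring
  rw [h2]
  rw [Finset.sum_filter]
  rw [Fintype.sum_prod_type]
  rw [Finset.sum_comm]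
  unfold pairSN
  rw [← Fin.sum_univ_eq_sum_range (fun n => (∑ i ∈ range n, g i) * g n) k]
  refine Finset.sum_congr rfl fun j _ => ?_
  calc ∑ i : Fin k, (if (i, j).1 < (i, j).2 then
          (par2 (d (i, j).1) + 1) * (par2 (d (i, j).2) + 1) else 0)
      = ∑ i : Fin k, (if ((i : ℕ)) < ((j : ℕ)) then g (i : ℕ) else 0) * g (j : ℕ) :=
        Finset.sum_congr rfl (fun i _ => by
          show (if i < j then (par2 (d i) + 1) * (par2 (d j) + 1) else 0) = _
          have hiff : i < j ↔ (i : ℕ) < (j : ℕ) := Fin.lt_def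
          by_cases hij : (i : ℕ) < (j : ℕ)
          · rw [if_pos (hiff.mpr hij), if_pos hij, hg i, hg j]
          · rw [if_neg fun h => hij (hiff.mp h), if_neg hij, zero_mul])
    _ = (∑ i : Fin k, if ((i : ℕ)) < ((j : ℕ)) then g (i : ℕ) else 0) * g (j : ℕ) :=
        (Finset.sum_mul _ _ _).symm
    _ = (∑ i ∈ range k, if i < (j : ℕ) then g i else 0) * g (j : ℕ) := by
        rw [Fin.sum_univ_eq_sum_range (fun n => if n < (j:ℕ) then g n else 0) k]
    _ = (∑ i ∈ range (j : ℕ), g i) * g ((j : ℕ)) := by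
        rw [sum_range_ite g (le_of_lt j.isLt)]

lemma chunkOff_eq_range {l : ℕ} (r : Fin l → ℕ) (j : Fin l) :
    chunkOff r j = ∑ i ∈ range (j : ℕ), extZ r i := by
  classical
  unfold chunkOff
  rw [Finset.sum_filter]
  have : ∀ j' : Fin l, (if (j' : ℕ) < (j : ℕ) then r j' else 0)
      = (fun n => if n < (j : ℕ) then extZ r n else 0) (j' : ℕ) := by
    intro j'
    simp only [extZ, j'.isLt, dif_pos, Fin.eta]
  rw [Finset.sum_congr rfl fun j' _ => this j',
    Fin.sum_univ_eq_sum_range (fun n => if n < (j:ℕ) then extZ r n else 0) l,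
    sum_range_ite _ (le_of_lt j.isLt)]

lemma chunkOff_add_le {l : ℕ} (r : Fin l → ℕ) (j : Fin l) :
    chunkOff r j + r j ≤ ∑ j', r j' := by
  classical
  unfold chunkOff
  have hnot : j ∉ Finset.univ.filter (fun j' : Fin l => (j' : ℕ) < (j : ℕ)) := by simp
  rw [add_comm, ← Finset.sum_insert hnot]
  exact Finset.sum_le_sum_of_subset (Finset.subset_univ _)

lemma chunkOff_rev {l : ℕ} (r : Fin l → ℕ) (j : Fin l) :
    chunkOff (fun j' => r (Fin.rev j')) j + (r (Fin.rev j) + chunkOff r (Fin.rev j))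
      = ∑ j', r j' := by
  classical
  have h1 : chunkOff (fun j' => r (Fin.rev j')) j
      = ∑ j'' ∈ Finset.univ.filter (fun j'' : Fin l => (Fin.rev j : ℕ) < (j'' : ℕ)), r j'' := by
    unfold chunkOff
    refine Finset.sum_nbij' (fun p : Fin l => p.rev) (fun p : Fin l => p.rev) ?_ ?_ ?_ ?_ ?_
    · intro a ha
      simp only [mem_filter, mem_univ, true_and] at ha ⊢
      rw [← Fin.lt_def] at ha ⊢
      exact Fin.rev_lt_rev.mpr ha
    · intro a ha
      simp only [mem_filter, mem_univ, true_and] at ha ⊢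
      rw [← Fin.lt_def] at ha ⊢
      rw [← Fin.rev_rev j]
      exact Fin.rev_lt_rev.mpr ha
    · intro a _; simp
    · intro a _; simp
    · intro a _; rfl
  rw [h1]
  unfold chunkOff
  have h2 : (Finset.univ : Finset (Fin l)) =
      (Finset.univ.filter (fun j'' : Fin l => (Fin.rev j : ℕ) < (j'' : ℕ))) ∪
      insert (Fin.rev j) (Finset.univ.filter (fun j' : Fin l => (j' : ℕ) < (Fin.rev j : ℕ))) := by
    ext x
    simp only [Finset.mem_univ, Finset.mem_union, Finset.mem_insert, mem_filter, true_and,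
      true_iff]
    rcases lt_trichotomy (x : ℕ) ((Fin.rev j : ℕ)) with h | h | h
    · right; right; exact h
    · right; left; exact Fin.ext h
    · left; exact h
  conv_rhs => rw [h2]
  have hnm : j.rev ∉ Finset.univ.filter (fun j' : Fin l => (j' : ℕ) < (Fin.rev j : ℕ)) := by
    intro hmem
    simp only [mem_filter, mem_univ, true_and] at hmem
    omega
  have hd : Disjoint (Finset.univ.filter (fun j'' : Fin l => (Fin.rev j : ℕ) < (j'' : ℕ)))
      (insert (Fin.rev j) (Finset.univ.filter (fun j' : Fin l => (j' : ℕ) < (Fin.rev j : ℕ)))) := by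
    rw [Finset.disjoint_left]
    intro a ha hb
    simp only [Finset.mem_insert, mem_filter, mem_univ, true_and] at ha hb
    rcases hb with rfl | hb <;> omega
  rw [Finset.sum_union hd, Finset.sum_insert hnm]

end Stmt7Aux

section CoreStep

open Finset

variable {𝕂 : Type} [Field 𝕂] {N : ℕ} {G : AddSubmonoid ℝ}
    {C : Type} [AddCommGroup C] [Module 𝕂 C] {D : Type} [AddCommGroup D] [Module 𝕂 D]

lemma extZ_apply_lt {X : Type} [Zero X] {k : ℕ} (α : Fin k → X) {n : ℕ} (h : n < k) :
    extZ α n = α ⟨n, h⟩ := by simp [extZ, h]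

lemma extZ_comp_map {X Y : Type} [Zero X] [Zero Y] {k : ℕ} (α : Fin k → X) (e : X → Y)
    (he : e 0 = 0) (n : ℕ) : extZ (fun j => e (α j)) n = e (extZ α n) := by
  unfold extZ
  split
  · rfl
  · rw [he]

lemma extZ_mem {k : ℕ} (𝒩 : ZMod N → Submodule 𝕂 D) {d : Fin k → ZMod N} {α : Fin k → D}
    (hα : ∀ j, α j ∈ 𝒩 (d j)) (n : ℕ) : extZ α n ∈ 𝒩 (extZ d n) := by
  unfold extZ
  split
  · exact hα _
  · exact zero_mem _

lemma rev_sum_eq {M : Type*} [AddCommMonoid M] {l : ℕ} (f : Fin l → M) :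
    ∑ j, f (Fin.rev j) = ∑ j, f j :=
  Fintype.sum_equiv Fin.revPerm (fun j => f (Fin.rev j)) f (fun _ => rfl)

lemma core_step (hN : 2 ∣ N)
    (ℳ : ZMod N → Submodule 𝕂 C) (𝒩 : ZMod N → Submodule 𝕂 D)
    (m : ∀ k : ℕ, G → (Fin k → C) → C)
    (hmul : ∀ (k : ℕ) (β : G), IsMultilin 𝕂 (m k β))
    (c : C →ₗ[𝕂] C) (cD : D →ₗ[𝕂] D)
    (hmsd : IsSelfDualFam 𝕂 ℳ c c m)
    (I : ∀ k : ℕ, G → (Fin k → D) → C)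
    (hI0 : ∀ β : G, I 0 β = 0)
    {V : Type} [AddCommGroup V] [Module 𝕂 V]
    (q : C →ₗ[𝕂] V) (Q : V →ₗ[𝕂] V)
    (hqc : ∀ x : C, q (c x) = Q (q x))
    (hQinj : Function.Injective Q)
    (k : ℕ) (β : G)
    (small : ℕ → G → Prop)
    (hsm : ∀ (l : ℕ) (r : Fin l → ℕ) (β₀ : G) (bs : Fin l → G), (∑ j, r j) = k →
      β₀ + (∑ j, bs j) = β → ¬(l = 1 ∧ β₀ = 0) → (∀ j, 1 ≤ r j) → ∀ j, small (r j) (bs j))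
    (IHdeg : ∀ (s : ℕ) (β' : G), small s β' → ∀ (d' : Fin s → ZMod N) (α' : Fin s → D),
      (∀ x, α' x ∈ 𝒩 (d' x)) →
      I s β' α' ∈ ℳ ((∑ x, d' x) + (((1 - (s : ℤ)) : ℤ) : ZMod N)))
    (IHsd : ∀ (s : ℕ) (β' : G), small s β' → ∀ (d' : Fin s → ZMod N) (α' : Fin s → D),
      (∀ x, α' x ∈ 𝒩 (d' x)) →
      I s β' (fun x => cD (α' x)) =
        sgn2 𝕂 (revSign d' + (s : ZMod 2) + 1) • c (I s β' fun x => α' (Fin.rev x)))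
    (d : Fin k → ZMod N) (α : Fin k → D) (hα : ∀ j, α j ∈ 𝒩 (d j)) :
    (∑ᶠ t ∈ {t | t ∈ homIdx G k β ∧ ¬(t.1 = 1 ∧ t.2.2.1 = 0)},
        homTerm (fun r b v => q (m r b v)) I (fun j => cD (α j)) t)
    = sgn2 𝕂 (revSign d + (k : ZMod 2) + 1) •
        Q (∑ᶠ t ∈ {t | t ∈ homIdx G k β ∧ ¬(t.1 = 1 ∧ t.2.2.1 = 0)},
          homTerm (fun r b v => q (m r b v)) I (fun j => α (Fin.rev j)) t) := by
  classical
  have h20 : (2 : ZMod 2) = 0 := by decide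
  have hI0' : ∀ (s : ℕ), s = 0 → ∀ (b : G) (v : Fin s → D), I s b v = 0 := by
    rintro s rfl b v
    exact congrFun (hI0 b) v
  set S : Set (Σ l : ℕ, (Fin l → ℕ) × G × (Fin l → G)) :=
    {t | t ∈ homIdx G k β ∧ ¬(t.1 = 1 ∧ t.2.2.1 = 0)} with hS
  let Fc : (Σ l : ℕ, (Fin l → ℕ) × G × (Fin l → G)) → V :=
    fun t => homTerm (fun r b v => q (m r b v)) I (fun j => cD (α j)) t
  let Fr : (Σ l : ℕ, (Fin l → ℕ) × G × (Fin l → G)) → V :=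
    fun t => homTerm (fun r b v => q (m r b v)) I (fun j => α (Fin.rev j)) t
  let σ : (Σ l : ℕ, (Fin l → ℕ) × G × (Fin l → G)) → (Σ l : ℕ, (Fin l → ℕ) × G × (Fin l → G)) :=
    fun t => ⟨t.1, fun j => t.2.1 (Fin.rev j), t.2.2.1, fun j => t.2.2.2 (Fin.rev j)⟩
  have hσσ : ∀ t, σ (σ t) = t := by
    rintro ⟨l, r, b0, bs⟩
    show (⟨l, fun j => r (Fin.rev (Fin.rev j)), b0, fun j => bs (Fin.rev (Fin.rev j))⟩ :
      Σ l : ℕ, (Fin l → ℕ) × G × (Fin l → G)) = ⟨l, r, b0, bs⟩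
    congr 1
    refine Prod.ext ?_ (Prod.ext rfl ?_)
    · funext j; simp [Fin.rev_rev]
    · funext j; simp [Fin.rev_rev]
  have hmemσ : ∀ t ∈ S, σ t ∈ S := by
    rintro ⟨l, r, b0, bs⟩ ⟨⟨hsum, hb⟩, hne⟩
    refine ⟨⟨?_, ?_⟩, hne⟩
    · show (∑ j, r (Fin.rev j)) = k
      rw [rev_sum_eq r]; exact hsum
    · show b0 + (∑ j, bs (Fin.rev j)) = β
      rw [rev_sum_eq bs]; exact hb
  have hbij : Set.BijOn σ S S := by
    refine ⟨hmemσ, fun a _ b _ hab => ?_, fun y hy => ⟨σ y, hmemσ y hy, hσσ y⟩⟩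
    rw [← hσσ a, hab, hσσ]
  have key : ∀ t ∈ S, Fc (σ t) = sgn2 𝕂 (revSign d + (k : ZMod 2) + 1) • Q (Fr t) := by
    rintro ⟨l, r, b0, bs⟩ ⟨⟨hsum, hb⟩, hne⟩
    by_cases hz : ∃ j, r j = 0
    · obtain ⟨j₀, hj₀⟩ := hz
      have hL : Fc (σ ⟨l, r, b0, bs⟩) = 0 := by
        show q (m l b0 _) = 0
        have hslot : (fun j : Fin l => I (r (Fin.rev j)) (bs (Fin.rev j))
            (fun x : Fin (r (Fin.rev j)) =>
              extZ (fun i => cD (α i)) (chunkOff (fun j' => r (Fin.rev j')) j + (x : ℕ))))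
            (Fin.rev j₀) = 0 :=
          hI0' _ (by rw [Fin.rev_rev]; exact hj₀) _ _
        rw [(hmul l b0).zero_slot _ (Fin.rev j₀) hslot, map_zero]
      have hR : Fr ⟨l, r, b0, bs⟩ = 0 := by
        show q (m l b0 _) = 0
        rw [(hmul l b0).zero_slot _ j₀ (hI0' _ hj₀ _ _), map_zero]
      rw [hL, hR, map_zero, smul_zero]
    · push_neg at hz
      have hr1 : ∀ j, 1 ≤ r j := fun j => Nat.one_le_iff_ne_zero.mpr (hz j)
      have hsmall : ∀ j : Fin l, small (r j) (bs j) := hsm l r b0 bs hsum hb hne hr1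
      have hoff : ∀ j : Fin l,
          chunkOff (fun j' => r (Fin.rev j')) j + (r (Fin.rev j) + chunkOff r (Fin.rev j)) = k := by
        intro j
        rw [chunkOff_rev r j]
        exact hsum
      have hbnd : ∀ j : Fin l, chunkOff r j + r j ≤ k := fun j => hsum ▸ chunkOff_add_le r j
      -- index-juggling identity connecting the two kinds of chunks
      have hplug : ∀ {X : Type} (_ : Zero X) (f : Fin k → X) (j : Fin l) (x : Fin (r (Fin.rev j))),
          extZ f (chunkOff (fun j' => r (Fin.rev j')) j + ((Fin.rev x : Fin (r (Fin.rev j))) : ℕ))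
            = extZ (fun i => f (Fin.rev i)) (chunkOff r (Fin.rev j) + (x : ℕ)) := by
        intro X _ f j x
        have h1 := hoff j
        have h2 := x.isLt
        have hvx : ((Fin.rev x : Fin (r (Fin.rev j))) : ℕ) = r (Fin.rev j) - ((x : ℕ) + 1) :=
          Fin.val_rev x
        have hk1 : chunkOff (fun j' => r (Fin.rev j')) j
            + ((Fin.rev x : Fin (r (Fin.rev j))) : ℕ) < k := by omega
        have hk2 : chunkOff r (Fin.rev j) + (x : ℕ) < k := by
          have := hbnd (Fin.rev j); omega
        rw [extZ_apply_lt f hk1, extZ_apply_lt _ hk2]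
        show f _ = f (Fin.rev _)
        have hidx : (Fin.rev (⟨chunkOff r (Fin.rev j) + (x : ℕ), hk2⟩ : Fin k))
            = ⟨chunkOff (fun j' => r (Fin.rev j')) j
                + ((Fin.rev x : Fin (r (Fin.rev j))) : ℕ), hk1⟩ := by
          apply Fin.ext
          rw [Fin.val_rev]
          simp only
          omega
        rw [hidx]
      -- the slot values of `Fr`
      have claim1 : ∀ j : Fin l,
          I (r (Fin.rev j)) (bs (Fin.rev j))
            (fun x : Fin (r (Fin.rev j)) =>
              extZ (fun i => cD (α i)) (chunkOff (fun j' => r (Fin.rev j')) j + (x : ℕ)))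
          = sgn2 𝕂 (revSign (fun x : Fin (r (Fin.rev j)) =>
                extZ d (chunkOff (fun j' => r (Fin.rev j')) j + (x : ℕ)))
              + ((r (Fin.rev j) : ℕ) : ZMod 2) + 1) •
            c (I (r (Fin.rev j)) (bs (Fin.rev j))
              (fun x : Fin (r (Fin.rev j)) =>
                extZ (fun i => α (Fin.rev i)) (chunkOff r (Fin.rev j) + (x : ℕ)))) := by
        intro j
        have h1 : (fun x : Fin (r (Fin.rev j)) =>
            extZ (fun i => cD (α i)) (chunkOff (fun j' => r (Fin.rev j')) j + (x : ℕ)))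
            = fun x : Fin (r (Fin.rev j)) =>
              cD (extZ α (chunkOff (fun j' => r (Fin.rev j')) j + (x : ℕ))) := by
          funext x
          exact extZ_comp_map α cD (map_zero cD) _
        rw [h1]
        rw [IHsd (r (Fin.rev j)) (bs (Fin.rev j)) (hsmall (Fin.rev j))
          (fun x => extZ d (chunkOff (fun j' => r (Fin.rev j')) j + (x : ℕ)))
          (fun x => extZ α (chunkOff (fun j' => r (Fin.rev j')) j + (x : ℕ)))
          (fun x => extZ_mem 𝒩 hα _)]
        have harg : (fun x : Fin (r (Fin.rev j)) =>
            extZ α (chunkOff (fun j' => r (Fin.rev j')) j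
              + ((Fin.rev x : Fin (r (Fin.rev j))) : ℕ)))
            = fun x : Fin (r (Fin.rev j)) =>
              extZ (fun i => α (Fin.rev i)) (chunkOff r (Fin.rev j) + (x : ℕ)) :=
          funext fun x => hplug _ α j x
        rw [harg]
      -- now assemble
      show q (m l b0 _) = _
      rw [show (fun j : Fin l =>
          I (r (Fin.rev j)) (bs (Fin.rev j))
            (fun x : Fin (r (Fin.rev j)) =>
              extZ (fun i => cD (α i)) (chunkOff (fun j' => r (Fin.rev j')) j + (x : ℕ))))
          = fun j : Fin l =>
            (sgn2 𝕂 (revSign (fun x : Fin (r (Fin.rev j)) =>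
                extZ d (chunkOff (fun j' => r (Fin.rev j')) j + (x : ℕ)))
              + ((r (Fin.rev j) : ℕ) : ZMod 2) + 1)) •
            (c (I (r (Fin.rev j)) (bs (Fin.rev j))
              (fun x : Fin (r (Fin.rev j)) =>
                extZ (fun i => α (Fin.rev i)) (chunkOff r (Fin.rev j) + (x : ℕ)))))
          from funext claim1]
      rw [(hmul l b0).smul_tuple]
      -- self-duality of m on the tuple  c (A (rev j))
      have hBdeg : ∀ j : Fin l,
          I (r (Fin.rev j)) (bs (Fin.rev j))
            (fun x : Fin (r (Fin.rev j)) =>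
              extZ (fun i => α (Fin.rev i)) (chunkOff r (Fin.rev j) + (x : ℕ)))
          ∈ ℳ ((∑ x : Fin (r (Fin.rev j)),
                extZ d (chunkOff (fun j' => r (Fin.rev j')) j + (x : ℕ)))
              + (((1 - ((r (Fin.rev j) : ℕ) : ℤ)) : ℤ) : ZMod N)) := by
        intro j
        have hmem := IHdeg (r (Fin.rev j)) (bs (Fin.rev j)) (hsmall (Fin.rev j))
          (fun x => extZ (fun i => d (Fin.rev i)) (chunkOff r (Fin.rev j) + (x : ℕ)))
          (fun x => extZ (fun i => α (Fin.rev i)) (chunkOff r (Fin.rev j) + (x : ℕ)))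
          (fun x => extZ_mem 𝒩 (fun i => hα (Fin.rev i)) _)
        have hsum_eq : (∑ x : Fin (r (Fin.rev j)),
              extZ (fun i => d (Fin.rev i)) (chunkOff r (Fin.rev j) + (x : ℕ)))
            = ∑ x : Fin (r (Fin.rev j)),
              extZ d (chunkOff (fun j' => r (Fin.rev j')) j + (x : ℕ)) := by
          rw [← rev_sum_eq (fun x : Fin (r (Fin.rev j)) =>
            extZ d (chunkOff (fun j' => r (Fin.rev j')) j + (x : ℕ)))]
          exact Finset.sum_congr rfl fun x _ => (hplug _ d j x).symm
        rwa [hsum_eq] at hmem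
      rw [hmsd l b0 (fun j => (∑ x : Fin (r (Fin.rev j)),
            extZ d (chunkOff (fun j' => r (Fin.rev j')) j + (x : ℕ)))
          + (((1 - ((r (Fin.rev j) : ℕ) : ℤ)) : ℤ) : ZMod N))
        (fun j => I (r (Fin.rev j)) (bs (Fin.rev j))
          (fun x : Fin (r (Fin.rev j)) =>
            extZ (fun i => α (Fin.rev i)) (chunkOff r (Fin.rev j) + (x : ℕ)))) hBdeg]
      -- un-double-reverse the tuple
      have hBrev : (fun j : Fin l => I (r (Fin.rev (Fin.rev j))) (bs (Fin.rev (Fin.rev j)))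
          (fun x : Fin (r (Fin.rev (Fin.rev j))) =>
            extZ (fun i => α (Fin.rev i)) (chunkOff r (Fin.rev (Fin.rev j)) + (x : ℕ))))
          = fun j : Fin l => I (r j) (bs j)
            (fun x : Fin (r j) =>
              extZ (fun i => α (Fin.rev i)) (chunkOff r j + (x : ℕ))) := by
        funext j
        rw [Fin.rev_rev j]
      rw [hBrev]
      rw [map_smul q, map_smul q, hqc, smul_smul]
      congr 1
      -- the sign identity
      rw [sgn2_sum 𝕂 Finset.univ, ← sgn2_add']
      congr 1
      -- now a pure `ZMod 2` identity
      set g : ℕ → ZMod 2 := fun n => par2 (extZ d n) + 1 with hgdef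
      set rN : ℕ → ℕ := extZ (fun j : Fin l => r (Fin.rev j)) with hrN
      have e1 : ∀ j : Fin l, rN (j : ℕ) = r (Fin.rev j) := by
        intro j
        simp [hrN, extZ, j.isLt]
      have e2 : ∀ j : Fin l, (∑ i ∈ range (j : ℕ), rN i)
          = chunkOff (fun j' => r (Fin.rev j')) j :=
        fun j => (chunkOff_eq_range _ j).symm
      have a1 : revSign d = pairSN k g :=
        revSign_eq_pairSN d g (fun i => by simp [hgdef, extZ, i.isLt])
      have a2 : ∀ j : Fin l, revSign (fun x : Fin (r (Fin.rev j)) =>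
            extZ d (chunkOff (fun j' => r (Fin.rev j')) j + (x : ℕ)))
          = pairSN (rN (j : ℕ)) (fun n => g ((∑ i ∈ range (j : ℕ), rN i) + n)) := by
        intro j
        rw [e1 j, e2 j]
        exact revSign_eq_pairSN _ _ (fun x => rfl)
      have a3 : revSign (fun j : Fin l => (∑ x : Fin (r (Fin.rev j)),
            extZ d (chunkOff (fun j' => r (Fin.rev j')) j + (x : ℕ)))
          + (((1 - ((r (Fin.rev j) : ℕ) : ℤ)) : ℤ) : ZMod N))
          = pairSN l (fun n => ∑ x ∈ range (rN n), g ((∑ i ∈ range n, rN i) + x)) := by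
        refine revSign_eq_pairSN _ _ (fun j => ?_)
        rw [e1 j, e2 j]
        have hL : ∑ x ∈ range (r (Fin.rev j)),
            g (chunkOff (fun j' => r (Fin.rev j')) j + x)
            = (∑ x ∈ range (r (Fin.rev j)),
                par2 (extZ d (chunkOff (fun j' => r (Fin.rev j')) j + x)))
              + ((r (Fin.rev j) : ℕ) : ZMod 2) := by
          rw [hgdef]
          rw [Finset.sum_add_distrib, Finset.sum_const, card_range, nsmul_eq_mul, mul_one]
        rw [hL]
        rw [par2_add hN, par2_sum hN, par2_intCast hN]
        rw [← Fin.sum_univ_eq_sum_range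
          (fun n => par2 (extZ d (chunkOff (fun j' => r (Fin.rev j')) j + n))) (r (Fin.rev j))]
        push_cast
        linear_combination (((r (Fin.rev j) : ℕ) : ZMod 2) - 1) * h20
      have a4 : (∑ i ∈ range l, rN i) = k := by
        rw [← Fin.sum_univ_eq_sum_range rN l]
        rw [Finset.sum_congr rfl (fun j _ => e1 j)]
        rw [rev_sum_eq r]
        exact hsum
      have a5 : ∑ j ∈ range l, pairSN (rN j) (fun n => g ((∑ i ∈ range j, rN i) + n))
          = ∑ j : Fin l, pairSN (rN (j : ℕ)) (fun n => g ((∑ i ∈ range (j : ℕ), rN i) + n)) :=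
        (Fin.sum_univ_eq_sum_range
          (fun j => pairSN (rN j) (fun n => g ((∑ i ∈ range j, rN i) + n))) l).symm
      have hdecomp := pairSN_chunks rN g l
      rw [a4] at hdecomp
      have hsum2 : ∑ j : Fin l, ((r (Fin.rev j) : ℕ) : ZMod 2) = ((k : ℕ) : ZMod 2) := by
        rw [← Nat.cast_sum]
        rw [rev_sum_eq r, hsum]
      have hones : ∑ _j : Fin l, (1 : ZMod 2) = ((l : ℕ) : ZMod 2) := by
        rw [Finset.sum_const, Finset.card_univ, Fintype.card_fin, nsmul_eq_mul, mul_one]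
      have hsplit : ∑ j : Fin l, (revSign (fun x : Fin (r (Fin.rev j)) =>
            extZ d (chunkOff (fun j' => r (Fin.rev j')) j + (x : ℕ)))
            + ((r (Fin.rev j) : ℕ) : ZMod 2) + 1)
          = (∑ j : Fin l, revSign (fun x : Fin (r (Fin.rev j)) =>
              extZ d (chunkOff (fun j' => r (Fin.rev j')) j + (x : ℕ))))
            + ((k : ℕ) : ZMod 2) + ((l : ℕ) : ZMod 2) := by
        rw [Finset.sum_add_distrib, Finset.sum_add_distrib, hsum2, hones]
      have hkey2 : revSign d = (∑ j : Fin l, revSign (fun x : Fin (r (Fin.rev j)) =>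
            extZ d (chunkOff (fun j' => r (Fin.rev j')) j + (x : ℕ))))
          + revSign (fun j : Fin l => (∑ x : Fin (r (Fin.rev j)),
              extZ d (chunkOff (fun j' => r (Fin.rev j')) j + (x : ℕ)))
            + (((1 - ((r (Fin.rev j) : ℕ) : ℤ)) : ℤ) : ZMod N)) := by
        rw [a1, hdecomp, a5, a3]
        congr 1
        exact Finset.sum_congr rfl fun j _ => (a2 j).symm
      rw [hsplit, hkey2]
      linear_combination ((l : ℕ) : ZMod 2) * h20
  -- outer assembly
  calc (∑ᶠ t ∈ S, Fc t)
      = ∑ᶠ t ∈ S, Fc (σ t) := (finsum_mem_eq_of_bijOn σ hbij fun x _ => rfl).symm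
    _ = ∑ᶠ t ∈ S, sgn2 𝕂 (revSign d + (k : ZMod 2) + 1) • Q (Fr t) :=
        finsum_mem_congr rfl key
    _ = sgn2 𝕂 (revSign d + (k : ZMod 2) + 1) • Q (∑ᶠ t ∈ S, Fr t) :=
        smul_map_finsum_mem_inj S Fr Q hQinj _ (sgn2_ne_zero 𝕂 _)

end CoreStep

/-- equivariant homological perturbation.  In the homological
perturbation setup, suppose moreover that `c` is a `𝕂`-linear degree-0 involution of `C`
such that `m` is `c` self-dual, and that the induced involution `ĉ = cD` of
`D = H*(C, m_{1,0})` satisfies `c∘i = i∘ĉ`, `ĉ∘p = p∘c`, `c∘h = h∘c`.  Then the `A∞`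
structure `m^D` is `ĉ` self-dual and the homomorphism `𝔦 = I` is `ĉ,c` self-dual:
`i_{k,β}(ĉ(α₁),…,ĉ(α_k)) = (−1)^{s(τ;α)+k+1} c(i_{k,β}(α_k,…,α₁))` on homogeneous
tuples. -/
theorem homological_perturbation_selfDual {𝕂 : Type} [Field 𝕂] {N : ℕ} (hN : 2 ∣ N)
    (G : AddSubmonoid ℝ) (hGnn : ∀ x ∈ G, (0 : ℝ) ≤ x)
    (hGfin : ∀ E : ℝ, {x : ℝ | x ∈ G ∧ x ≤ E}.Finite)
    {C : Type} [AddCommGroup C] [Module 𝕂 C] (ℳ : ZMod N → Submodule 𝕂 C)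
    [DirectSum.Decomposition ℳ]
    (m : ∀ k : ℕ, G → (Fin k → C) → C) (hm : IsGappedAinf 𝕂 G ℳ m)
    {D : Type} [AddCommGroup D] [Module 𝕂 D] (𝒩 : ZMod N → Submodule 𝕂 D)
    [DirectSum.Decomposition 𝒩]
    (i : D →ₗ[𝕂] C) (p : C →ₗ[𝕂] D) (h : C →ₗ[𝕂] C)
    (hideg : ∀ (e : ZMod N) (x : D), x ∈ 𝒩 e → i x ∈ ℳ e)
    (hpdeg : ∀ (e : ZMod N) (x : C), x ∈ ℳ e → p x ∈ 𝒩 e)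
    (hhdeg : ∀ (e : ZMod N) (x : C), x ∈ ℳ e → h x ∈ ℳ (e - 1))
    (hpd : ∀ x : C, p (dOne m x) = 0)
    (hdi : ∀ x : D, dOne m (i x) = 0)
    (hpi : ∀ x : D, p (i x) = x)
    (hht : ∀ x : C, dOne m (h x) + h (dOne m x) = i (p x) - x)
    (I : ∀ k : ℕ, G → (Fin k → D) → C) (mD : ∀ k : ℕ, G → (Fin k → D) → D)
    (hI0 : ∀ β : G, I 0 β = 0)
    (hI10 : ∀ α : Fin 1 → D, I 1 0 α = i (α 0))
    (hIrec : ∀ (k : ℕ) (β : G), 1 ≤ k → (k, β) ≠ (1, 0) → ∀ α : Fin k → D,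
      I k β α = ∑ᶠ t ∈ {t | t ∈ homIdx G k β ∧ ¬(t.1 = 1 ∧ t.2.2.1 = 0)},
        homTerm (fun r β₀ v => h (m r β₀ v)) I α t)
    (hD10 : mD 1 0 = 0)
    (hDrec : ∀ (k : ℕ) (β : G), (k, β) ≠ (1, 0) → ∀ α : Fin k → D,
      mD k β α = ∑ᶠ t ∈ {t | t ∈ homIdx G k β ∧ ¬(t.1 = 1 ∧ t.2.2.1 = 0)},
        homTerm (fun r β₀ v => p (m r β₀ v)) I α t)
    -- the involution `c` of `C` and the induced involution `ĉ = cD` of `D`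
    (c : C →ₗ[𝕂] C) (hcinv : ∀ x, c (c x) = x)
    (hcdeg : ∀ (e : ZMod N) (x : C), x ∈ ℳ e → c x ∈ ℳ e)
    (hmsd : IsSelfDualFam 𝕂 ℳ c c m)
    (cD : D →ₗ[𝕂] D) (hcDinv : ∀ x, cD (cD x) = x)
    (hcDdeg : ∀ (e : ZMod N) (x : D), x ∈ 𝒩 e → cD x ∈ 𝒩 e)
    (hic : ∀ x : D, c (i x) = i (cD x))
    (hpc : ∀ x : C, cD (p x) = p (c x))
    (hhc : ∀ x : C, c (h x) = h (c x)) :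
    -- `m^D` is `ĉ` self-dual and `𝔦` is `ĉ,c` self-dual
    IsSelfDualFam 𝕂 𝒩 cD cD mD ∧ IsSelfDualFam 𝕂 𝒩 cD c I := by
    classical
  have hcinj : Function.Injective c := fun x y hxy => by rw [← hcinv x, hxy, hcinv]
  have hcDinj : Function.Injective cD := fun x y hxy => by rw [← hcDinv x, hxy, hcDinv]
  set cnt : G → ℕ := fun b => (hGfin (b : ℝ)).toFinset.card with hcnt
  have hmono : ∀ b1 b2 : G, (b1 : ℝ) ≤ (b2 : ℝ) → cnt b1 ≤ cnt b2 := by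
    intro b1 b2 hle
    apply Finset.card_le_card
    intro x hx
    simp only [Set.Finite.mem_toFinset, Set.mem_setOf_eq] at hx ⊢
    exact ⟨hx.1, le_trans hx.2 hle⟩
  have hstrict : ∀ b1 b2 : G, (b1 : ℝ) < (b2 : ℝ) → cnt b1 < cnt b2 := by
    intro b1 b2 hlt
    apply Finset.card_lt_card
    rw [Finset.ssubset_iff_of_subset]
    · refine ⟨(b2 : ℝ), ?_, ?_⟩
      · simp only [Set.Finite.mem_toFinset, Set.mem_setOf_eq]
        exact ⟨b2.2, le_refl _⟩
      · simp only [Set.Finite.mem_toFinset, Set.mem_setOf_eq]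
        intro hx
        exact absurd hx.2 (not_le.mpr hlt)
    · intro x hx
      simp only [Set.Finite.mem_toFinset, Set.mem_setOf_eq] at hx ⊢
      exact ⟨hx.1, le_trans hx.2 hlt.le⟩
  have hGsum : ∀ (l : ℕ) (f : Fin l → G), ((∑ j, f j : G) : ℝ) = ∑ j, (f j : ℝ) := by
    intro l f
    push_cast
    rfl
  have hsmkey : ∀ (k : ℕ) (β : G) (l : ℕ) (r : Fin l → ℕ) (b0 : G) (bs : Fin l → G),
      (∑ j, r j) = k → b0 + (∑ j, bs j) = β → ¬(l = 1 ∧ b0 = 0) → (∀ j, 1 ≤ r j) →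
      ∀ j, cnt (bs j) * (r j + 1) + r j < cnt β * (k + 1) + k := by
    intro k β l r b0 bs hsum hb hne hr1 j
    have hbsle : ∀ j', (bs j' : ℝ) ≤ (β : ℝ) - (b0 : ℝ) := by
      intro j'
      have hcoe : (b0 : ℝ) + ∑ j'', (bs j'' : ℝ) = (β : ℝ) := by
        rw [← hGsum l bs]
        exact_mod_cast congrArg Subtype.val hb
      have hle : (bs j' : ℝ) ≤ ∑ j'', (bs j'' : ℝ) :=
        Finset.single_le_sum (fun j'' _ => hGnn _ (bs j'').2) (Finset.mem_univ j')
      linarith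
    have hrk : ∀ j', r j' ≤ k := by
      intro j'
      rw [← hsum]
      exact Finset.single_le_sum (fun _ _ => Nat.zero_le _) (Finset.mem_univ j')
    by_cases hl1 : l = 1
    · have hb0 : b0 ≠ 0 := fun h => hne ⟨hl1, h⟩
      have hb0pos : (0 : ℝ) < (b0 : ℝ) :=
        lt_of_le_of_ne (hGnn _ b0.2) (fun h => hb0 (Subtype.ext h.symm))
      have hlt : (bs j : ℝ) < (β : ℝ) := lt_of_le_of_lt (hbsle j) (by linarith)
      have h1 : cnt (bs j) < cnt β := hstrict _ _ hlt
      have h2 : r j ≤ k := hrk j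
      have hp1 : cnt (bs j) * (r j + 1) ≤ cnt (bs j) * (k + 1) :=
        Nat.mul_le_mul_left _ (by omega)
      have hp2 : cnt (bs j) * (k + 1) < cnt β * (k + 1) :=
        Nat.mul_lt_mul_of_lt_of_le h1 (le_refl _) (by omega)
      omega
    · have hl2 : 2 ≤ l := by have := j.pos; omega
      have hnt : Nontrivial (Fin l) := Fin.nontrivial_iff_two_le.mpr hl2
      obtain ⟨j', hj'⟩ := exists_ne j
      have hsub : r j + r j' ≤ ∑ j'', r j'' := by
        have hss : ({j, j'} : Finset (Fin l)).sum r ≤ Finset.univ.sum r :=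
          Finset.sum_le_sum_of_subset (Finset.subset_univ _)
        rwa [Finset.sum_pair (Ne.symm hj')] at hss
      have hrjk : r j + 1 ≤ k := by
        have := hr1 j'
        rw [hsum] at hsub
        omega
      have hcle : cnt (bs j) ≤ cnt β := by
        apply hmono
        have := hGnn _ b0.2
        have := hbsle j
        linarith
      have hp : cnt (bs j) * (r j + 1) ≤ cnt β * k := Nat.mul_le_mul hcle (by omega)
      have hq : cnt β * k ≤ cnt β * (k + 1) := Nat.mul_le_mul_left _ (by omega)
      omega
  have hI0' : ∀ (s : ℕ), s = 0 → ∀ (b : G) (v : Fin s → D), I s b v = 0 := by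
    rintro s rfl b v
    exact congrFun (hI0 b) v
  -- the simultaneous induction
  have main : ∀ n : ℕ, ∀ (k : ℕ) (β : G), cnt β * (k + 1) + k ≤ n →
      (∀ (d : Fin k → ZMod N) (α : Fin k → D), (∀ j, α j ∈ 𝒩 (d j)) →
          I k β α ∈ ℳ ((∑ j, d j) + (((1 - (k : ℤ)) : ℤ) : ZMod N)))
      ∧ (∀ (d : Fin k → ZMod N) (α : Fin k → D), (∀ j, α j ∈ 𝒩 (d j)) →
          I k β (fun j => cD (α j)) =
            sgn2 𝕂 (revSign d + (k : ZMod 2) + 1) • c (I k β fun j => α (Fin.rev j)))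
      ∧ (∀ (d : Fin k → ZMod N) (α : Fin k → D), (∀ j, α j ∈ 𝒩 (d j)) →
          mD k β (fun j => cD (α j)) =
            sgn2 𝕂 (revSign d + (k : ZMod 2) + 1) • cD (mD k β fun j => α (Fin.rev j))) := by
    intro n
    induction n using Nat.strong_induction_on with
    | _ n IH =>
    intro k β hn
    have IHdeg : ∀ (s : ℕ) (β' : G), (cnt β' * (s + 1) + s < cnt β * (k + 1) + k) →
        ∀ (d' : Fin s → ZMod N) (α' : Fin s → D), (∀ x, α' x ∈ 𝒩 (d' x)) →
        I s β' α' ∈ ℳ ((∑ x, d' x) + (((1 - (s : ℤ)) : ℤ) : ZMod N)) :=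
      fun s β' hlt => (IH _ (lt_of_lt_of_le hlt hn) s β' le_rfl).1
    have IHsd : ∀ (s : ℕ) (β' : G), (cnt β' * (s + 1) + s < cnt β * (k + 1) + k) →
        ∀ (d' : Fin s → ZMod N) (α' : Fin s → D), (∀ x, α' x ∈ 𝒩 (d' x)) →
        I s β' (fun x => cD (α' x)) =
          sgn2 𝕂 (revSign d' + (s : ZMod 2) + 1) • c (I s β' fun x => α' (Fin.rev x)) :=
      fun s β' hlt => (IH _ (lt_of_lt_of_le hlt hn) s β' le_rfl).2.1
    refine ⟨?_, ?_, ?_⟩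
    · -- degree statement for I
      intro d α hα
      by_cases hk0 : k = 0
      · subst hk0
        rw [show I 0 β α = 0 from congrFun (hI0 β) α]
        exact zero_mem _
      by_cases hkb : k = 1 ∧ β = 0
      · obtain ⟨rfl, rfl⟩ := hkb
        rw [hI10 α]
        have hmem := hideg (d 0) (α 0) (hα 0)
        have hdeq : (∑ j, d j) + (((1 - ((1 : ℕ) : ℤ)) : ℤ) : ZMod N) = d 0 := by
          rw [Fin.sum_univ_one]
          norm_num
        rw [hdeq]
        exact hmem
      · have hne : (k, β) ≠ (1, 0) := fun h => hkb ⟨congrArg Prod.fst h, congrArg Prod.snd h⟩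
        have hk1 : 1 ≤ k := by omega
        rw [hIrec k β hk1 hne α]
        apply finsum_mem_submodule
        rintro ⟨l, r, b0, bs⟩ ⟨⟨hsum, hb⟩, hneT⟩
        by_cases hz : ∃ j, r j = 0
        · obtain ⟨j₀, hj₀⟩ := hz
          show h (m l b0 _) ∈ _
          rw [(hm.multilinear l b0).zero_slot _ j₀ (hI0' _ hj₀ _ _), map_zero]
          exact zero_mem _
        · push_neg at hz
          have hr1 : ∀ j, 1 ≤ r j := fun j => Nat.one_le_iff_ne_zero.mpr (hz j)
          have hargs : ∀ j : Fin l,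
              I (r j) (bs j) (fun x : Fin (r j) => extZ α (chunkOff r j + (x : ℕ)))
              ∈ ℳ ((∑ x : Fin (r j), extZ d (chunkOff r j + (x : ℕ)))
                  + (((1 - ((r j : ℕ) : ℤ)) : ℤ) : ZMod N)) :=
            fun j => IHdeg (r j) (bs j) (hsmkey k β l r b0 bs hsum hb hneT hr1 j)
              _ _ (fun x => extZ_mem 𝒩 hα _)
          have hm2 := hm.deg l b0 (fun j => (∑ x : Fin (r j), extZ d (chunkOff r j + (x : ℕ)))
              + (((1 - ((r j : ℕ) : ℤ)) : ℤ) : ZMod N)) _ hargs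
          have hh2 := hhdeg _ _ hm2
          -- identify the degrees
          have e1 : ∀ j : Fin l, extZ r (j : ℕ) = r j := by
            intro j
            simp [extZ, j.isLt]
          have ha4 : (∑ i ∈ Finset.range l, extZ r i) = k := by
            rw [← Fin.sum_univ_eq_sum_range (extZ r) l,
              Finset.sum_congr rfl (fun j _ => e1 j)]
            exact hsum
          have hS1 : ∑ j : Fin l, ∑ x : Fin (r j), extZ d (chunkOff r j + (x : ℕ))
              = ∑ j : Fin k, d j := by
            have hstep : ∀ j : Fin l, (∑ x : Fin (r j), extZ d (chunkOff r j + (x : ℕ)))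
                = ∑ x ∈ Finset.range (extZ r (j : ℕ)),
                    extZ d ((∑ i ∈ Finset.range (j : ℕ), extZ r i) + x) := by
              intro j
              rw [e1 j, ← chunkOff_eq_range r j]
              exact Fin.sum_univ_eq_sum_range (fun x => extZ d (chunkOff r j + x)) (r j)
            rw [Finset.sum_congr rfl (fun j _ => hstep j),
              Fin.sum_univ_eq_sum_range (fun n => ∑ x ∈ Finset.range (extZ r n),
                extZ d ((∑ i ∈ Finset.range n, extZ r i) + x)) l,
              sum_range_chunks (extZ r) (extZ d) l, ha4,
              ← Fin.sum_univ_eq_sum_range (extZ d) k]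
            exact Finset.sum_congr rfl (fun j _ => by simp [extZ, j.isLt])
          have hS2 : ∑ j : Fin l, (((1 - ((r j : ℕ) : ℤ)) : ℤ) : ZMod N)
              = (((l : ℤ) - (k : ℤ) : ℤ) : ZMod N) := by
            have hz2 : ∑ j : Fin l, (((1 - ((r j : ℕ) : ℤ)) : ℤ) : ZMod N)
                = (((∑ j : Fin l, (1 - ((r j : ℕ) : ℤ)) : ℤ)) : ZMod N) := by
              push_cast
              ring
            rw [hz2]
            congr 1
            rw [Finset.sum_sub_distrib, Finset.sum_const, Finset.card_univ, Fintype.card_fin]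
            have : ∑ j : Fin l, ((r j : ℕ) : ℤ) = ((k : ℕ) : ℤ) := by
              rw [← Nat.cast_sum, hsum]
            rw [this]
            simp
          have hdeq : (∑ j : Fin l, ((∑ x : Fin (r j), extZ d (chunkOff r j + (x : ℕ)))
                + (((1 - ((r j : ℕ) : ℤ)) : ℤ) : ZMod N)))
              + (((2 - (l : ℤ)) : ℤ) : ZMod N) - 1
              = (∑ j, d j) + (((1 - (k : ℤ)) : ℤ) : ZMod N) := by
            rw [Finset.sum_add_distrib, hS1, hS2]
            push_cast
            ring
          rw [← hdeq]
          exact hh2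
    · -- self-duality of I
      intro d α hα
      by_cases hk0 : k = 0
      · subst hk0
        rw [hI0' 0 rfl β (fun j => cD (α j)), hI0' 0 rfl β (fun j => α (Fin.rev j)),
          map_zero, smul_zero]
      by_cases hkb : k = 1 ∧ β = 0
      · obtain ⟨rfl, rfl⟩ := hkb
        rw [hI10 (fun j => cD (α j)), hI10 (fun j => α (Fin.rev j))]
        have hrev0 : (Fin.rev 0 : Fin 1) = 0 := Subsingleton.elim _ _
        rw [hrev0]
        have hsgn : sgn2 𝕂 (revSign d + ((1 : ℕ) : ZMod 2) + 1) = 1 := by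
          have hrs : revSign d = 0 := by
            rw [revSign_eq_pairSN d (fun n => par2 (extZ d n) + 1)
              (fun i => by
                simp [extZ, i.isLt]
                exact congrArg (fun x => par2 (d x)) (Subsingleton.elim 0 i))]
            simp [pairSN]
          rw [hrs, show ((0 : ZMod 2) + ((1 : ℕ) : ZMod 2) + 1) = 0 by decide]
          simp [sgn2]
        rw [hsgn, one_smul]
        exact (hic (α 0)).symm
      · have hne : (k, β) ≠ (1, 0) := fun h => hkb ⟨congrArg Prod.fst h, congrArg Prod.snd h⟩
        have hk1 : 1 ≤ k := by omega
        rw [hIrec k β hk1 hne (fun j => cD (α j)), hIrec k β hk1 hne (fun j => α (Fin.rev j))]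
        exact core_step hN ℳ 𝒩 m hm.multilinear c cD hmsd I hI0 h c
          (fun x => (hhc x).symm) hcinj k β
          (fun s β' => cnt β' * (s + 1) + s < cnt β * (k + 1) + k)
          (hsmkey k β) IHdeg IHsd d α hα
    · -- self-duality of mD
      intro d α hα
      by_cases hkb : k = 1 ∧ β = 0
      · obtain ⟨rfl, rfl⟩ := hkb
        rw [show mD 1 0 = 0 from hD10]
        simp
      · have hne : (k, β) ≠ (1, 0) := fun h => hkb ⟨congrArg Prod.fst h, congrArg Prod.snd h⟩
        rw [hDrec k β hne (fun j => cD (α j)), hDrec k β hne (fun j => α (Fin.rev j))]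
        exact core_step hN ℳ 𝒩 m hm.multilinear c cD hmsd I hI0 p cD
          (fun x => (hpc x).symm) hcDinj k β
          (fun s β' => cnt β' * (s + 1) + s < cnt β * (k + 1) + k)
          (hsmkey k β) IHdeg IHsd d α hα
  exact ⟨fun k β d α hα => (main (cnt β * (k + 1) + k) k β le_rfl).2.2 d α hα,
    fun k β d α hα => (main (cnt β * (k + 1) + k) k β le_rfl).2.1 d α hα⟩
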